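/- Let d ≥ 1 be an integer, C > 0 a real, and θ_0, …, θ_{d−1} reals satisfying |θ_i − iπ/d| ≤ Cπ/d for every 0 ≤ i ≤ d−1. Then for every ℓ ∈ {0,…,d−1} and every real γ with 8(C+1)π/d ≤ γ ≤ π: dγ/(4π) ≤ #{i ∈ {0,…,d−1} : |θ_i − θ_ℓ| ≤ γ/2} ≤ 3dγ/(2π). (This counting statement is the content of the paper's corollary that Jacobi polynomial families are dense: by Szegő's theorem the arccosines θ_i of the roots of the degree-d Jacobi polynomial satisfy the spacing hypothesis with C = C^{α,β}; the constants here are adjusted slightly from (1/(2π), 3/(2π), 8Cπ) so that the bounds also hold for indices ℓ near the boundary.) -/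

import Mathlib

/-!
With `p = π / d`, the spacing hypothesis makes `|θ i - θ ℓ|` differ from `|i - ℓ| p` by at most
`2 C p`. Hence, putting `x = d γ / (2 π)`, the window `|θ i - θ ℓ| ≤ γ / 2 = x p` contains every
index with `|i - ℓ| ≤ x - 2 C` and only indices with `|i - ℓ| ≤ x + 2 C`. An interval of radius
`K` around `ℓ` contains at least `min K d` and at most `2 K + 1` points of `{0, …, d - 1}`, and
`4 (C + 1) ≤ x ≤ d / 2` turns these counts into `x / 2` and `3 x`.
-/

open Finset

theorem abs_abs_sub_sub_abs_sub_le {a b u v ε : ℝ} (ha : |a - u| ≤ ε) (hb : |b - v| ≤ ε) :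
    |(|a - b| - |u - v|)| ≤ 2 * ε :=
  calc |(|a - b| - |u - v|)| ≤ |(a - u) - (b - v)| := by
        rw [show (a - u) - (b - v) = (a - b) - (u - v) by ring]
        exact abs_abs_sub_abs_le_abs_sub _ _
    _ ≤ |a - u| + |b - v| := abs_sub _ _
    _ ≤ 2 * ε := by linarith

namespace Fin

variable {d : ℕ}

theorem min_le_card_filter_abs_sub_le (ℓ : Fin d) (K : ℝ) :
    min K d ≤ #(univ.filter fun i : Fin d => |((i : ℕ) : ℝ) - (ℓ : ℕ)| ≤ K) := by
  set S := univ.filter fun i : Fin d => |((i : ℕ) : ℝ) - (ℓ : ℕ)| ≤ K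
  rcases lt_or_ge K 0 with hK | hK
  · exact (min_le_left _ _).trans (hK.le.trans (Nat.cast_nonneg _))
  set n := ⌊K⌋₊
  have hsub : Icc ((ℓ : ℕ) - n) (min (d - 1) (ℓ + n)) ⊆ S.map valEmbedding := by
    intro j hj
    rw [mem_Icc] at hj
    refine mem_map.mpr ⟨⟨j, by omega⟩, mem_filter.mpr ⟨mem_univ _, ?_⟩, rfl⟩
    have hn : (n : ℝ) ≤ K := Nat.floor_le hK
    have h1 : (j : ℝ) ≤ ℓ + n := by exact_mod_cast (show j ≤ ℓ + n by omega)
    have h2 : (ℓ : ℝ) ≤ j + n := by exact_mod_cast (show (ℓ : ℕ) ≤ j + n by omega)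
    rw [abs_le]
    constructor <;> linarith
  have hcard : min (n + 1) d ≤ #S := by
    have := card_le_card hsub
    rw [Nat.card_Icc, card_map] at this
    omega
  calc min K d ≤ ((min (n + 1) d : ℕ) : ℝ) := by
        push_cast
        exact min_le_min_right _ (Nat.lt_floor_add_one K).le
    _ ≤ #S := by exact_mod_cast hcard

theorem card_filter_abs_sub_le_le (ℓ : Fin d) {K : ℝ} (hK : 0 ≤ K) :
    (#(univ.filter fun i : Fin d => |((i : ℕ) : ℝ) - (ℓ : ℕ)| ≤ K) : ℝ) ≤ 2 * K + 1 := by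
  set S := univ.filter fun i : Fin d => |((i : ℕ) : ℝ) - (ℓ : ℕ)| ≤ K
  set n := ⌊K⌋₊
  have hKn : K < n + 1 := Nat.lt_floor_add_one K
  have hsub : S.map valEmbedding ⊆ Icc ((ℓ : ℕ) - n) (ℓ + n) := by
    intro j hj
    obtain ⟨i, hi, rfl⟩ := mem_map.mp hj
    rw [mem_filter, abs_le] at hi
    have h1 : (i : ℕ) < ℓ + n + 1 := by exact_mod_cast (show (i : ℝ) < ℓ + n + 1 by linarith)
    have h2 : (ℓ : ℕ) < i + n + 1 := by exact_mod_cast (show (ℓ : ℝ) < i + n + 1 by linarith)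
    rw [mem_Icc]
    exact ⟨by simp only [valEmbedding_apply]; omega, by simp only [valEmbedding_apply]; omega⟩
  have hcard : #S ≤ 2 * n + 1 := by
    have := card_le_card hsub
    rw [Nat.card_Icc, card_map] at this
    omega
  calc (#S : ℝ) ≤ 2 * n + 1 := by exact_mod_cast hcard
    _ ≤ 2 * K + 1 := by linarith [Nat.floor_le hK]

end Fin

section PerturbedLattice

variable {d : ℕ} {θ : Fin d → ℝ} {p C : ℝ}

theorem min_le_card_filter_abs_sub_le_of_abs_sub_le (hp : 0 < p)
    (hθ : ∀ i : Fin d, |θ i - (i : ℕ) * p| ≤ C * p) (ℓ : Fin d) (x : ℝ) :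
    min (x - 2 * C) d ≤ #(univ.filter fun i : Fin d => |θ i - θ ℓ| ≤ x * p) := by
  refine (Fin.min_le_card_filter_abs_sub_le ℓ (x - 2 * C)).trans ?_
  refine Nat.cast_le.mpr (card_le_card (monotone_filter_right _ fun i _ hi => ?_))
  have h := abs_le.mp (abs_abs_sub_sub_abs_sub_le (hθ i) (hθ ℓ))
  rw [← sub_mul, abs_mul, abs_of_pos hp] at h
  nlinarith

theorem card_filter_abs_sub_le_le_of_abs_sub_le (hp : 0 < p)
    (hθ : ∀ i : Fin d, |θ i - (i : ℕ) * p| ≤ C * p) (ℓ : Fin d) {x : ℝ} (hx : 0 ≤ x) :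
    (#(univ.filter fun i : Fin d => |θ i - θ ℓ| ≤ x * p) : ℝ) ≤ 2 * (x + 2 * C) + 1 := by
  have hC : 0 ≤ C := (mul_nonneg_iff_of_pos_right hp).mp ((abs_nonneg _).trans (hθ ℓ))
  refine le_trans ?_ (Fin.card_filter_abs_sub_le_le ℓ (by linarith : 0 ≤ x + 2 * C))
  refine Nat.cast_le.mpr (card_le_card (monotone_filter_right _ fun i _ hi => ?_))
  have h := abs_le.mp (abs_abs_sub_sub_abs_sub_le (hθ i) (hθ ℓ))
  rw [← sub_mul, abs_mul, abs_of_pos hp] at h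
  by_contra! hlt
  nlinarith

end PerturbedLattice

open Classical in
theorem stmt_17 (d : ℕ) (C : ℝ) (hC : 0 < C) (θ : Fin d → ℝ)
    (hθ : ∀ i : Fin d, |θ i - (i : ℕ) * Real.pi / d| ≤ C * Real.pi / d)
    (ℓ : Fin d) (γ : ℝ) (hγ1 : 8 * (C + 1) * Real.pi / d ≤ γ) (hγ2 : γ ≤ Real.pi) :
    (d : ℝ) * γ / (4 * Real.pi) ≤
        ((Finset.univ.filter (fun i : Fin d => |θ i - θ ℓ| ≤ γ / 2)).card : ℝ) ∧
      ((Finset.univ.filter (fun i : Fin d => |θ i - θ ℓ| ≤ γ / 2)).card : ℝ) ≤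
        3 * (d : ℝ) * γ / (2 * Real.pi) := by
  have hd : (0 : ℝ) < d := by exact_mod_cast ℓ.pos
  have hp : 0 < Real.pi / d := by positivity
  have hθ' : ∀ i : Fin d, |θ i - (i : ℕ) * (Real.pi / d)| ≤ C * (Real.pi / d) := by
    simpa only [mul_div_assoc] using hθ
  set x := d * γ / (2 * Real.pi) with hx_def
  have hwindow : γ / 2 = x * (Real.pi / d) := by rw [hx_def]; field_simp
  have hx : 4 * (C + 1) ≤ x := by
    rw [div_le_iff₀ hd] at hγ1
    rw [le_div_iff₀ (by positivity)]
    nlinarith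
  have hxd : x ≤ d / 2 := by
    rw [div_le_iff₀ (by positivity)]
    nlinarith [Real.pi_pos]
  rw [hwindow]
  constructor
  · calc (d : ℝ) * γ / (4 * Real.pi) = x / 2 := by ring
      _ ≤ min (x - 2 * C) d := le_min (by linarith) (by linarith)
      _ ≤ _ := min_le_card_filter_abs_sub_le_of_abs_sub_le hp hθ' ℓ x
  · calc _ ≤ 2 * (x + 2 * C) + 1 :=
          card_filter_abs_sub_le_le_of_abs_sub_le hp hθ' ℓ (by linarith)
      _ ≤ 3 * (d : ℝ) * γ / (2 * Real.pi) := by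
          rw [show 3 * (d : ℝ) * γ / (2 * Real.pi) = 3 * x by ring]
          linarith
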